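/- arXiv:math/9811027 — 4 statements merged into one kernel-verified Lean document; each statement's English description precedes it below -/
import Mathlib

section
/- There is no nonzero group homomorphism from the profinite completion of the integers to the integers, i.e., Hom(Ẑ, ℤ) = 0. -/
/-- The inverse limit of the groups `ℤ/n` over `n ≥ 1` (the profinite completion of `ℤ`),
as an additive subgroup of the product `∀ n, ℤ/n`. -/
def ZHatSub : AddSubgroup (∀ n : ℕ+, ZMod n) where
  carrier := {x | ∀ (m n : ℕ+) (h : (m : ℕ) ∣ (n : ℕ)), ZMod.castHom h (ZMod m) (x n) = x m}
  zero_mem' := by intro m n h; simp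
  add_mem' := by
    intro a b ha hb m n h
    simp only [Pi.add_apply, map_add, ha m n h, hb m n h]
  neg_mem' := by
    intro a ha m n h
    simp only [Pi.neg_apply, map_neg, ha m n h]

/-- The profinite completion `Ẑ` of the integers. -/
abbrev ZHat : Type := ZHatSub

open Nat in
lemma two_pow_congr (m : ℕ) (hm : 0 < m) (s : ℕ) (hs : m.factorial ∣ s) (hs0 : s ≠ 0) :
    (2:ℕ) ^ s ≡ 2 ^ m.factorial [MOD m] := by
  set a := m.factorization 2 with ha
  set b := ordCompl[2] m with hb
  have hPb : 2 ^ a * b = m := Nat.ordProj_mul_ordCompl_eq_self m 2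
  have hcop2b : Nat.Coprime 2 b := Nat.coprime_ordCompl Nat.prime_two hm.ne'
  have hbpos : 0 < b := Nat.ordCompl_pos 2 hm.ne'
  have hble : b ≤ m := Nat.ordCompl_le m 2
  have hφ : Nat.totient b ∣ m.factorial :=
    Nat.dvd_factorial (Nat.totient_pos.mpr hbpos) ((Nat.totient_le b).trans hble)
  have hsge : m.factorial ≤ s := Nat.le_of_dvd (Nat.pos_of_ne_zero hs0) hs
  have hamle : a ≤ m.factorial :=
    (Nat.lt_two_pow_self (n := a)).le.trans ((Nat.ordProj_le 2 hm.ne').trans (Nat.self_le_factorial m))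
  have key : ∀ t, Nat.totient b ∣ t → (2:ℕ) ^ t ≡ 1 [MOD b] := by
    intro t ht
    obtain ⟨k, rfl⟩ := ht
    rw [pow_mul]
    calc (2 ^ b.totient) ^ k ≡ 1 ^ k [MOD b] := (Nat.ModEq.pow_totient hcop2b).pow k
    _ = 1 := one_pow k
  have h1 : (2:ℕ) ^ s ≡ 2 ^ m.factorial [MOD 2 ^ a] :=
    ((Nat.modEq_zero_iff_dvd).mpr (pow_dvd_pow 2 (hamle.trans hsge))).trans
      ((Nat.modEq_zero_iff_dvd).mpr (pow_dvd_pow 2 hamle)).symm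
  have h2 : (2:ℕ) ^ s ≡ 2 ^ m.factorial [MOD b] :=
    (key s (hφ.trans hs)).trans (key _ hφ).symm
  have h3 := (Nat.modEq_and_modEq_iff_modEq_mul (Nat.Coprime.pow_left a hcop2b)).mp ⟨h1, h2⟩
  rwa [hPb] at h3

lemma two_pow_zmod (m : ℕ+) (s : ℕ) (hs : (m:ℕ).factorial ∣ s) (hs0 : s ≠ 0) :
    (2 : ZMod m) ^ s = 2 ^ (m:ℕ).factorial := by
  have h := (ZMod.natCast_eq_natCast_iff _ _ _).mpr (two_pow_congr m m.pos s hs hs0)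
  push_cast at h
  exact h

lemma two_pow_fact_eq_one {m : ℕ} (hm : 0 < m) (hodd : Nat.Coprime 2 m) :
    (2 : ZMod m) ^ m.factorial = 1 := by
  obtain ⟨k, hk⟩ := Nat.dvd_factorial (Nat.totient_pos.mpr hm) (Nat.totient_le m)
  have h := (Nat.ModEq.pow_totient hodd).pow k
  rw [← pow_mul, ← hk, one_pow] at h
  have h2 := (ZMod.natCast_eq_natCast_iff _ _ _).mpr h
  push_cast at h2
  exact h2

lemma zhat_compat (x : ZHat) (m n : ℕ+) (h : (m : ℕ) ∣ (n : ℕ)) :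
    ZMod.castHom h (ZMod m) (x.1 n) = x.1 m := x.2 m n h

lemma zhat_val_cast (x : ZHat) (m n : ℕ+) (h : (m : ℕ) ∣ (n : ℕ)) :
    (((x.1 n).val : ℕ) : ZMod m) = x.1 m := by
  haveI : NeZero ((n : ℕ)) := ⟨n.ne_zero⟩
  rw [← zhat_compat x m n h, ZMod.castHom_apply, ZMod.natCast_val]

lemma zhat_div (x : ZHat) (n : ℕ+) (h : x.1 n = 0) : ∃ y : ZHat, x = (n : ℕ) • y := by
  have hnm : ∀ m : ℕ+, (n : ℕ) ∣ ((n * m : ℕ+) : ℕ) := by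
    intro m; rw [PNat.mul_coe]; exact dvd_mul_right _ _
  have hdvd : ∀ m : ℕ+, (n : ℕ) ∣ (x.1 (n * m)).val := by
    intro m
    have h1 := zhat_val_cast x n (n * m) (hnm m)
    rw [h] at h1
    exact (ZMod.natCast_eq_zero_iff _ _).mp h1
  have hdivmod : ∀ (m m' : ℕ+) (hmm : (m : ℕ) ∣ (m' : ℕ)),
      ∃ q : ℕ, (x.1 (n * m')).val / (n : ℕ) = (x.1 (n * m)).val / (n : ℕ) + (m : ℕ) * q := by
    intro m m' hmm
    haveI : NeZero (((n * m : ℕ+) : ℕ)) := ⟨(n * m).ne_zero⟩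
    have hdd : ((n * m : ℕ+) : ℕ) ∣ ((n * m' : ℕ+) : ℕ) := by
      rw [PNat.mul_coe, PNat.mul_coe]; exact Nat.mul_dvd_mul_left _ hmm
    have hc : (((x.1 (n * m')).val : ℕ) : ZMod ((n * m : ℕ+) : ℕ)) = x.1 (n * m) :=
      zhat_val_cast x (n * m) (n * m') hdd
    have hval : (x.1 (n * m)).val = (x.1 (n * m')).val % ((n * m : ℕ+) : ℕ) := by
      rw [← hc, ZMod.val_natCast]
    set q : ℕ := (x.1 (n * m')).val / ((n * m : ℕ+) : ℕ) with hqdef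
    refine ⟨q, ?_⟩
    have h1 : (x.1 (n * m')).val = (x.1 (n * m)).val + (n : ℕ) * ((m : ℕ) * q) := by
      have hmod : ((n * m : ℕ+) : ℕ) * q + (x.1 (n * m)).val = (x.1 (n * m')).val := by
        rw [hval, hqdef]; exact Nat.div_add_mod _ _
      have h2 : ((n * m : ℕ+) : ℕ) * q = (n : ℕ) * ((m : ℕ) * q) := by
        rw [PNat.mul_coe]; ring
      omega
    rw [h1, Nat.add_mul_div_left _ _ n.pos]
  have hmem : (fun m : ℕ+ => (((x.1 (n * m)).val / (n : ℕ) : ℕ) : ZMod m)) ∈ ZHatSub := by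
    intro m m' hmm
    obtain ⟨q, hq⟩ := hdivmod m m' hmm
    show ZMod.castHom hmm (ZMod m) _ = _
    rw [map_natCast, hq]
    push_cast
    simp
  refine ⟨⟨_, hmem⟩, ?_⟩
  apply Subtype.ext
  funext m
  simp only [AddSubmonoidClass.coe_nsmul, Pi.smul_apply, nsmul_eq_mul]
  rw [← Nat.cast_mul, Nat.mul_div_cancel' (hdvd m)]
  exact (zhat_val_cast x m (n * m) (by rw [PNat.mul_coe]; exact dvd_mul_left _ _)).symm

lemma zhat_dvd_of_component_zero (f : ZHat →+ ℤ) (x : ZHat) (n : ℕ+) (h : x.1 n = 0) :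
    ((n : ℕ) : ℤ) ∣ f x := by
  obtain ⟨y, rfl⟩ := zhat_div x n h
  rw [map_nsmul, nsmul_eq_mul]
  exact Dvd.intro _ rfl

lemma int_eq_zero_of_forall_pow_dvd (p : ℕ) (hp : 1 < p) (c : ℤ) (h : ∀ k : ℕ, ((p:ℤ))^k ∣ c) :
    c = 0 := by
  by_contra h0
  have h1 : ((p:ℤ))^c.natAbs ≤ |c| :=
    Int.le_of_dvd (abs_pos.mpr h0) ((dvd_abs _ _).mpr (h _))
  have h2 : |c| < ((p:ℤ))^c.natAbs := by
    rw [Int.abs_eq_natAbs]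
    exact_mod_cast Nat.lt_pow_self (n := c.natAbs) hp
  omega

lemma zhat_y_mem (x : ZHat) :
    (fun m : ℕ+ => (2 : ZMod m) ^ (m:ℕ).factorial * x.1 m) ∈ ZHatSub := by
  intro m n hmn
  show ZMod.castHom hmn (ZMod m) _ = _
  rw [map_mul, map_pow, map_ofNat, zhat_compat x m n hmn,
    two_pow_zmod m _ (Nat.factorial_dvd_factorial (Nat.le_of_dvd n.pos hmn))
      (Nat.factorial_ne_zero _)]

/-- There is no nonzero group homomorphism from the profinite completion of the
integers to the integers: `Hom(Ẑ, ℤ) = 0`. -/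
theorem hom_zhat_int_eq_zero : ∀ f : ZHat →+ ℤ, f = 0 := by
  intro f
  ext x
  show f x = 0
  set y : ZHat := ⟨_, zhat_y_mem x⟩ with hy
  have hfy : f y = 0 := by
    apply int_eq_zero_of_forall_pow_dvd 2 one_lt_two
    intro k
    have hyk : y.1 ((2:ℕ+)^k) = 0 := by
      show (2 : ZMod (((2:ℕ+)^k : ℕ+) : ℕ)) ^ ((((2:ℕ+)^k : ℕ+) : ℕ)).factorial
          * x.1 ((2:ℕ+)^k) = 0
      have hcoe : (((2:ℕ+)^k : ℕ+) : ℕ) = 2^k := by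
        rw [PNat.pow_coe]; norm_num
      have hk2 : k ≤ ((((2:ℕ+)^k : ℕ+) : ℕ)).factorial := by
        rw [hcoe]
        exact (Nat.lt_two_pow_self (n := k)).le.trans (Nat.self_le_factorial _)
      have hz : (2 : ZMod (((2:ℕ+)^k : ℕ+) : ℕ)) ^ ((((2:ℕ+)^k : ℕ+) : ℕ)).factorial = 0 := by
        haveI : NeZero ((((2:ℕ+)^k : ℕ+) : ℕ)) := ⟨((2:ℕ+)^k).ne_zero⟩
        have : ((2^((((2:ℕ+)^k : ℕ+) : ℕ)).factorial : ℕ) : ZMod (((2:ℕ+)^k : ℕ+) : ℕ)) = 0 := by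
          rw [ZMod.natCast_eq_zero_iff, hcoe]
          exact pow_dvd_pow 2 hk2
        rw [Nat.cast_pow, Nat.cast_ofNat] at this
        exact this
      rw [hz, zero_mul]
    have hdvd := zhat_dvd_of_component_zero f y _ hyk
    have : ((((2:ℕ+)^k : ℕ+) : ℕ) : ℤ) = (2:ℤ)^k := by
      rw [PNat.pow_coe]; push_cast; norm_num
    rwa [this] at hdvd
  have hfz : f (x - y) = 0 := by
    apply int_eq_zero_of_forall_pow_dvd 3 (by norm_num)
    intro k
    have hzk : (x - y).1 ((3:ℕ+)^k) = 0 := by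
      have hcoe : (((3:ℕ+)^k : ℕ+) : ℕ) = 3^k := by
        rw [PNat.pow_coe]; norm_num
      have hsub : (x - y).1 ((3:ℕ+)^k) = x.1 ((3:ℕ+)^k) - y.1 ((3:ℕ+)^k) := rfl
      have hone : (2 : ZMod (((3:ℕ+)^k : ℕ+) : ℕ)) ^ ((((3:ℕ+)^k : ℕ+) : ℕ)).factorial = 1 := by
        apply two_pow_fact_eq_one ((3:ℕ+)^k).pos
        rw [hcoe]
        exact Nat.Coprime.pow_right k (by decide)
      have hyv : y.1 ((3:ℕ+)^k) = x.1 ((3:ℕ+)^k) := by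
        show (2 : ZMod (((3:ℕ+)^k : ℕ+) : ℕ)) ^ ((((3:ℕ+)^k : ℕ+) : ℕ)).factorial
            * x.1 ((3:ℕ+)^k) = x.1 ((3:ℕ+)^k)
        rw [hone, one_mul]
      rw [hsub, hyv, sub_self]
    have hdvd := zhat_dvd_of_component_zero f (x - y) _ hzk
    have : ((((3:ℕ+)^k : ℕ+) : ℕ) : ℤ) = (3:ℤ)^k := by
      rw [PNat.pow_coe]; push_cast; norm_num
    rwa [this] at hdvd
  have : f x = f y + f (x - y) := by rw [← map_add]; congr 1; abel
  rw [this, hfy, hfz, add_zero]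
end

section
/- The integers ℤ are not a direct summand of their profinite completion Ẑ; equivalently, there is no abelian group A with Ẑ ≅ ℤ ⊕ A. -/
namespace ZHatAux

lemma mem_iff (x : ∀ n : ℕ+, ZMod n) :
    x ∈ ZHatSub ↔ ∀ (m n : ℕ+) (h : (m : ℕ) ∣ (n : ℕ)),
      ZMod.castHom h (ZMod m) (x n) = x m := Iff.rfl

lemma compat (x : ZHat) (m n : ℕ+) (h : (m : ℕ) ∣ (n : ℕ)) :
    ZMod.castHom h (ZMod m) (x.1 n) = x.1 m := x.2 m n h

/-- The multiplicative identity element of `Ẑ`, i.e. `(1, 1, 1, …)`. -/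
def one : ZHat := ⟨fun _ => 1, by intro m n h; exact map_one _⟩

lemma one_apply (n : ℕ+) : one.1 n = 1 := rfl

/-- values are congruent along divisibility -/
lemma val_compat (x : ZHat) (m n : ℕ+) (h : (m : ℕ) ∣ (n : ℕ)) :
    (x.1 n).val ≡ (x.1 m).val [MOD (m:ℕ)] := by
  have h1 := compat x m n h
  rw [ZMod.castHom_apply] at h1
  rw [← ZMod.natCast_eq_natCast_iff]
  rw [ZMod.natCast_val, ZMod.natCast_zmod_val, h1]

/-- Key divisibility lemma: if the `n`-th component of `x` vanishes then `x` is
divisible by `n` in `Ẑ`. -/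
lemma exists_nsmul (x : ZHat) (n : ℕ+) (hx : x.1 n = 0) :
    ∃ w : ZHat, x = (n : ℕ) • w := by
  have hdvd : ∀ k : ℕ+, (n : ℕ) ∣ (x.1 (k * n)).val := by
    intro k
    have h1 := compat x n (k * n) (Nat.dvd_of_mod_eq_zero (by simp))
    rw [hx, ZMod.castHom_apply] at h1
    have h2 : ((x.1 (k * n)).val : ZMod (n:ℕ)) = 0 := by
      rw [ZMod.natCast_val, h1]
    exact (ZMod.natCast_eq_zero_iff _ _).1 h2
  refine ⟨⟨fun k => (((x.1 (k * n)).val / (n : ℕ) : ℕ) : ZMod k), ?_⟩, ?_⟩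
  · intro m k h
    rw [map_natCast]
    rw [ZMod.natCast_eq_natCast_iff]
    have hmk : ((m * n : ℕ+) : ℕ) ∣ ((k * n : ℕ+) : ℕ) := by
      simpa using Nat.mul_dvd_mul_right h (n : ℕ)
    have hmod : (x.1 (k * n)).val ≡ (x.1 (m * n)).val [MOD ((m:ℕ) * (n:ℕ))] := by
      simpa using val_compat x (m * n) (k * n) hmk
    have ha := hdvd k
    have hb := hdvd m
    have hmod2 : (n:ℕ) * ((x.1 (k * n)).val / (n:ℕ)) ≡
        (n:ℕ) * ((x.1 (m * n)).val / (n:ℕ)) [MOD (n:ℕ) * (m:ℕ)] := by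
      rw [Nat.mul_div_cancel' ha, Nat.mul_div_cancel' hb]
      simpa [Nat.mul_comm] using hmod
    exact Nat.ModEq.mul_left_cancel' n.ne_zero hmod2
  · apply Subtype.ext
    funext k
    show x.1 k = (n:ℕ) • (((x.1 (k * n)).val / (n : ℕ) : ℕ) : ZMod (k:ℕ))
    have hmul : ((n:ℕ) : ZMod (k:ℕ)) * (((x.1 (k*n)).val / (n:ℕ) : ℕ) : ZMod (k:ℕ))
        = (((x.1 (k*n)).val : ℕ) : ZMod (k:ℕ)) := by
      rw [← Nat.cast_mul, Nat.mul_div_cancel' (hdvd k)]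
    rw [nsmul_eq_mul, hmul]
    have h3 := compat x k (k*n) (Nat.dvd_of_mod_eq_zero (by simp))
    rw [ZMod.castHom_apply] at h3
    rw [ZMod.natCast_val, h3]

lemma hom_congr (f : ZHat →+ ℤ) (x : ZHat) (n : ℕ+) :
    ((n:ℕ) : ℤ) ∣ f x - ((x.1 n).val : ℤ) * f one := by
  have hy : (x - (x.1 n).val • one).1 n = 0 := by
    show x.1 n - (x.1 n).val • (1 : ZMod (n:ℕ)) = 0
    rw [nsmul_eq_mul, mul_one, ZMod.natCast_zmod_val, sub_self]
  obtain ⟨w, hw⟩ := exists_nsmul _ n hy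
  refine ⟨f w, ?_⟩
  have h2 := congrArg f hw
  rw [map_sub, map_nsmul, map_nsmul] at h2
  have h3 : f x - ((x.1 n).val : ℤ) * f one = ((n:ℕ):ℤ) * f w := by
    rw [nsmul_eq_mul, nsmul_eq_mul] at h2
    linarith
  exact h3

/-! ### The CRT idempotent `E` (0 at the 2-part, 1 at the odd part) -/

def Apart (n : ℕ+) : ℕ := 2 ^ ((n:ℕ).factorization 2)
def Bpart (n : ℕ+) : ℕ := (n:ℕ) / Apart n

lemma AB (n : ℕ+) : Apart n * Bpart n = (n:ℕ) := Nat.ordProj_mul_ordCompl_eq_self n 2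
lemma Apart_dvd (n : ℕ+) : Apart n ∣ (n:ℕ) := Nat.ordProj_dvd _ 2
lemma Bpart_dvd (n : ℕ+) : Bpart n ∣ (n:ℕ) := Nat.ordCompl_dvd _ 2
lemma cop (n : ℕ+) : (Apart n).Coprime (Bpart n) :=
  Nat.Coprime.pow_left _ (Nat.coprime_ordCompl Nat.prime_two n.ne_zero)

def cc (n : ℕ+) : ℕ := (Nat.chineseRemainder (cop n) 0 1 : ℕ)
lemma cc_spec (n : ℕ+) : cc n ≡ 0 [MOD Apart n] ∧ cc n ≡ 1 [MOD Bpart n] :=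
  (Nat.chineseRemainder (cop n) 0 1).2

def Efam (n : ℕ+) : ZMod n := ((cc n : ℕ) : ZMod n)

lemma Efam_castA (n : ℕ+) :
    ZMod.castHom (Apart_dvd n) (ZMod (Apart n)) (Efam n) = 0 := by
  rw [Efam, map_natCast, ZMod.natCast_eq_zero_iff]
  exact (Nat.modEq_zero_iff_dvd).1 (cc_spec n).1

lemma Efam_castB (n : ℕ+) :
    ZMod.castHom (Bpart_dvd n) (ZMod (Bpart n)) (Efam n) = 1 := by
  rw [Efam, map_natCast]
  have h := (ZMod.natCast_eq_natCast_iff _ _ _).2 (cc_spec n).2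
  simpa using h

lemma zmod_ext (n : ℕ+) (x y : ZMod n)
    (hA : ZMod.castHom (Apart_dvd n) (ZMod (Apart n)) x
        = ZMod.castHom (Apart_dvd n) (ZMod (Apart n)) y)
    (hB : ZMod.castHom (Bpart_dvd n) (ZMod (Bpart n)) x
        = ZMod.castHom (Bpart_dvd n) (ZMod (Bpart n)) y) :
    x = y := by
  have hxA : (x.val : ZMod (Apart n)) = (y.val : ZMod (Apart n)) := by
    rw [ZMod.natCast_val, ZMod.natCast_val]
    exact hA
  have hxB : (x.val : ZMod (Bpart n)) = (y.val : ZMod (Bpart n)) := by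
    rw [ZMod.natCast_val, ZMod.natCast_val]
    exact hB
  have h1 : x.val ≡ y.val [MOD Apart n] := (ZMod.natCast_eq_natCast_iff _ _ _).1 hxA
  have h2 : x.val ≡ y.val [MOD Bpart n] := (ZMod.natCast_eq_natCast_iff _ _ _).1 hxB
  have h3 : x.val ≡ y.val [MOD (n:ℕ)] := by
    have h5 := (Nat.modEq_and_modEq_iff_modEq_mul (cop n)).1 ⟨h1, h2⟩
    rwa [AB n] at h5
  have h4 : (x.val : ZMod (n:ℕ)) = (y.val : ZMod (n:ℕ)) :=
    (ZMod.natCast_eq_natCast_iff _ _ _).2 h3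
  rwa [ZMod.natCast_zmod_val, ZMod.natCast_zmod_val] at h4

lemma Apart_dvd_Apart {m n : ℕ+} (h : (m:ℕ) ∣ (n:ℕ)) : Apart m ∣ Apart n :=
  Nat.ordProj_dvd_ordProj_of_dvd n.ne_zero h 2
lemma Bpart_dvd_Bpart {m n : ℕ+} (h : (m:ℕ) ∣ (n:ℕ)) : Bpart m ∣ Bpart n :=
  Nat.ordCompl_dvd_ordCompl_of_dvd h 2

def E : ZHat := ⟨fun n => Efam n, by
  intro m n h
  apply zmod_ext m
  · calc ZMod.castHom (Apart_dvd m) (ZMod (Apart m)) (ZMod.castHom h (ZMod (m:ℕ)) (Efam n))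
        = ZMod.castHom (dvd_trans (Apart_dvd m) h) (ZMod (Apart m)) (Efam n) :=
          RingHom.congr_fun (ZMod.castHom_comp (Apart_dvd m) h) (Efam n)
      _ = ZMod.castHom (Apart_dvd_Apart h) (ZMod (Apart m))
            (ZMod.castHom (Apart_dvd n) (ZMod (Apart n)) (Efam n)) :=
          (RingHom.congr_fun (ZMod.castHom_comp (Apart_dvd_Apart h) (Apart_dvd n)) (Efam n)).symm
      _ = 0 := by rw [Efam_castA, map_zero]
      _ = ZMod.castHom (Apart_dvd m) (ZMod (Apart m)) (Efam m) := (Efam_castA m).symm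
  · calc ZMod.castHom (Bpart_dvd m) (ZMod (Bpart m)) (ZMod.castHom h (ZMod (m:ℕ)) (Efam n))
        = ZMod.castHom (dvd_trans (Bpart_dvd m) h) (ZMod (Bpart m)) (Efam n) :=
          RingHom.congr_fun (ZMod.castHom_comp (Bpart_dvd m) h) (Efam n)
      _ = ZMod.castHom (Bpart_dvd_Bpart h) (ZMod (Bpart m))
            (ZMod.castHom (Bpart_dvd n) (ZMod (Bpart n)) (Efam n)) :=
          (RingHom.congr_fun (ZMod.castHom_comp (Bpart_dvd_Bpart h) (Bpart_dvd n)) (Efam n)).symm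
      _ = 1 := by rw [Efam_castB, map_one]
      _ = ZMod.castHom (Bpart_dvd m) (ZMod (Bpart m)) (Efam m) := (Efam_castB m).symm⟩

lemma Apart_two_pow (k : ℕ) : Apart ((2:ℕ+)^k) = 2^k := by
  unfold Apart
  have : (((2:ℕ+)^k : ℕ+) : ℕ) = 2^k := by simp
  rw [this, Nat.Prime.factorization_pow Nat.prime_two]
  simp

lemma E_two_pow (k : ℕ) : E.1 ((2:ℕ+)^k) = 0 := by
  have h := (cc_spec ((2:ℕ+)^k)).1
  rw [Apart_two_pow] at h
  have hd : 2^k ∣ cc ((2:ℕ+)^k) := (Nat.modEq_zero_iff_dvd).1 h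
  have hd2 : ((((2:ℕ+)^k) : ℕ+):ℕ) ∣ cc ((2:ℕ+)^k) := by simpa using hd
  exact (ZMod.natCast_eq_zero_iff _ _).2 hd2

lemma Bpart_three : Bpart 3 = 3 := by
  unfold Bpart Apart
  have h3 : ((3:ℕ+):ℕ) = 3 := rfl
  rw [h3, Nat.factorization_eq_zero_of_not_dvd (by decide)]
  simp

lemma E_three : E.1 3 = 1 := by
  have h := (cc_spec 3).2
  rw [Bpart_three] at h
  have h2 : ((cc 3 : ℕ) : ZMod ((3:ℕ+):ℕ)) = ((1:ℕ) : ZMod ((3:ℕ+):ℕ)) :=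
    (ZMod.natCast_eq_natCast_iff _ _ _).2 h
  rw [Nat.cast_one] at h2
  exact h2

end ZHatAux

open ZHatAux in
/-- `ℤ` is not a direct summand of its profinite completion `Ẑ`: there is no
abelian group `A` with `Ẑ ≅ ℤ ⊕ A`. -/
theorem int_not_summand_of_zhat :
    ¬ ∃ (A : Type) (_ : AddCommGroup A), Nonempty (ZHat ≃+ (ℤ × A)) := by
  rintro ⟨A, _, ⟨e⟩⟩
  let π : ZHat →+ ℤ := (AddMonoidHom.fst ℤ A).comp e.toAddMonoidHom
  have key : ∀ (x : ZHat) (n : ℕ+), ((n:ℕ):ℤ) ∣ π x - ((x.1 n).val : ℤ) * π one :=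
    fun x n => hom_congr π x n
  set c : ℤ := π one with hc
  set x₀ : ZHat := e.symm (1, 0) with hx₀def
  have hx₀ : π x₀ = 1 := by
    show ((e (e.symm (1,0))).1 : ℤ) = 1
    rw [e.apply_symm_apply]
  -- Step 1 : `c = ±1`.
  have hcabs : c.natAbs = 1 := by
    by_contra hne
    set N : ℕ+ := ⟨max c.natAbs 2, by positivity⟩ with hN
    have hdvd := key x₀ N
    rw [hx₀] at hdvd
    have hNc : ((N:ℕ):ℤ) ∣ ((x₀.1 N).val : ℤ) * c := by
      rcases Nat.eq_zero_or_pos c.natAbs with h0 | hpos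
      · have hc0 : c = 0 := Int.natAbs_eq_zero.1 h0
        simp [hc0]
      · have h2 : 2 ≤ c.natAbs := by omega
        have hNeq : ((N:ℕ):ℤ) = (c.natAbs:ℤ) := by
          have : (N:ℕ) = c.natAbs := by simp [hN, Nat.max_eq_left h2]
          exact_mod_cast this
        rw [hNeq]
        exact Dvd.dvd.mul_left (Int.natAbs_dvd.mpr dvd_rfl) _
    have h1 : ((N:ℕ):ℤ) ∣ 1 := by
      have := dvd_add hdvd hNc
      simpa using this
    have h1' : (N:ℕ) ∣ 1 := by
      have := Int.natCast_dvd_natCast.mp (by exact_mod_cast h1)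
      exact this
    have : (N:ℕ) = 1 := Nat.dvd_one.mp h1'
    have hge : 2 ≤ (N:ℕ) := by simp [hN]
    omega
  have hcc : c * c = 1 := by
    rcases Int.natAbs_eq_iff.mp hcabs with h | h <;> rw [h] <;> norm_num
  -- Step 2 : the congruence `c * π E ≡ (E n).val  [mod n]` for all `n`.
  have hE : ∀ n : ℕ+, ((n:ℕ):ℤ) ∣ c * π E - ((E.1 n).val : ℤ) := by
    intro n
    have h := (key E n).mul_left c
    have heq : c * (π E - ((E.1 n).val : ℤ) * c) = c * π E - ((E.1 n).val : ℤ) := by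
      calc c * (π E - ((E.1 n).val : ℤ) * c)
          = c * π E - ((E.1 n).val : ℤ) * (c * c) := by ring
        _ = c * π E - ((E.1 n).val : ℤ) := by rw [hcc, mul_one]
    rwa [heq] at h
  -- Step 3 : contradiction via the idempotent `E`.
  have h3 : (3:ℤ) ∣ c * π E - 1 := by
    have h := hE 3
    have hval : ((E.1 3).val : ℤ) = 1 := by rw [E_three]; rfl
    rw [hval] at h
    exact_mod_cast h
  have h2k : ∀ k : ℕ, (2^k : ℤ) ∣ c * π E := by
    intro k
    have h := hE ((2:ℕ+)^k)
    have hval : ((E.1 ((2:ℕ+)^k)).val : ℤ) = 0 := by rw [E_two_pow, ZMod.val_zero]; simp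
    rw [hval, sub_zero] at h
    have hcast : ((((2:ℕ+)^k : ℕ+):ℕ):ℤ) = (2:ℤ)^k := by push_cast; ring
    rwa [hcast] at h
  have ht0 : c * π E = 0 := by
    by_contra ht
    have hk := h2k ((c * π E).natAbs)
    have h1 : ((2:ℤ)^((c * π E).natAbs)) ∣ ((c * π E).natAbs : ℤ) := (Int.dvd_natAbs).2 hk
    have h2 : (2^((c * π E).natAbs) : ℕ) ∣ (c * π E).natAbs := by
      exact_mod_cast h1
    have h4 : (2^((c * π E).natAbs) : ℕ) ≤ (c * π E).natAbs :=
      Nat.le_of_dvd (by omega) h2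
    have := Nat.lt_two_pow_self (n := (c * π E).natAbs)
    omega
  rw [ht0] at h3
  norm_num at h3
end

section
/- Let A, B, C be abelian groups with C finitely generated. If Ext¹(A, B) has no nonzero divisible elements, then Ext¹(A ⊗ C, B) and Ext¹(Tor₁(A, C), B) have no nonzero divisible elements. -/
open CategoryTheory

/-- `Ext¹(A, B)` for abelian groups (ℤ-modules) `A`, `B`. -/
noncomputable abbrev Ext1 (A B : ModuleCat ℤ) : ModuleCat ℤ :=
  ((Ext ℤ (ModuleCat ℤ) 1).obj (Opposite.op A)).obj B

/-- `Tor₁(A, C)` for abelian groups (ℤ-modules) `A`, `C`. -/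
noncomputable abbrev Tor1 (A C : ModuleCat ℤ) : ModuleCat ℤ :=
  ((Tor (ModuleCat ℤ) 1).obj A).obj C

/-- An element of an abelian group is divisible if it is divisible by every nonzero integer. -/
def IsDivisibleElt {G : Type*} [AddCommGroup G] (x : G) : Prop :=
  ∀ n : ℤ, n ≠ 0 → ∃ y : G, n • y = x

section AuxInstances
open CategoryTheory.Limits

variable {V W : Type*} [Category V] [Category W] [Preadditive V] [Preadditive W]

instance mapHomotopyCategory_additive (F : V ⥤ W) [F.Additive] {ι : Type*} (c : ComplexShape ι) :
    (F.mapHomotopyCategory c).Additive where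
  map_add {X Y f g} := by
    obtain ⟨f, rfl⟩ := (HomotopyCategory.quotient V c).map_surjective f
    obtain ⟨g, rfl⟩ := (HomotopyCategory.quotient V c).map_surjective g
    exact (inferInstance : (F.mapHomotopyCategory c).Additive).map_add

variable {C : Type*} [Category C] [Abelian C] [HasProjectiveResolutions C]
variable {D : Type*} [Category D] [Abelian D]

instance projectiveResolutions_additive : (projectiveResolutions C).Additive where
  map_add {X Y f g} := by
    dsimp [projectiveResolutions]
    have hh := HomotopyCategory.eq_of_homotopy _ _
      (ProjectiveResolution.liftHomotopy (f + g)
        (ProjectiveResolution.lift (f + g) (projectiveResolution X) (projectiveResolution Y))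
        (ProjectiveResolution.lift f (projectiveResolution X) (projectiveResolution Y) +
          ProjectiveResolution.lift g (projectiveResolution X) (projectiveResolution Y))
        (by simp) (by simp [Preadditive.add_comp, Preadditive.comp_add]))
    rw [Functor.map_add] at hh
    exact hh

instance leftDerivedToHomotopyCategory_additive (F : C ⥤ D) [F.Additive] :
    F.leftDerivedToHomotopyCategory.Additive :=
  inferInstanceAs (projectiveResolutions C ⋙ F.mapHomotopyCategory _).Additive

instance leftDerived_additive (F : C ⥤ D) [F.Additive] (n : ℕ) :
    (F.leftDerived n).Additive :=
  inferInstanceAs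
    (F.leftDerivedToHomotopyCategory ⋙ HomotopyCategory.homologyFunctor D _ n).Additive

instance tor_obj_additive (A : ModuleCat ℤ) : ((Tor (ModuleCat ℤ) 1).obj A).Additive := by
  dsimp only [Tor]; infer_instance

end AuxInstances

section EmAPI

/-- The contravariant action of `Ext¹(-, B)` on morphisms. -/
noncomputable def exm (B : ModuleCat ℤ) {X Y : ModuleCat ℤ} (f : X ⟶ Y) :
    Ext1 Y B ⟶ Ext1 X B :=
  ((Ext ℤ (ModuleCat ℤ) 1).map f.op).app B

lemma em_eq (B : ModuleCat ℤ) {X Y : ModuleCat ℤ} (f : X ⟶ Y) :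
    exm B f = (((((linearYoneda ℤ (ModuleCat ℤ)).obj B).rightOp.leftDerived 1)).map f).unop :=
  rfl

lemma em_comp (B : ModuleCat ℤ) {X Y Z : ModuleCat ℤ} (f : X ⟶ Y) (g : Y ⟶ Z) :
    exm B (f ≫ g) = exm B g ≫ exm B f := by
  rw [em_eq, em_eq, em_eq, Functor.map_comp]
  rfl

lemma em_id (B X : ModuleCat ℤ) : exm B (𝟙 X) = 𝟙 (Ext1 X B) := by
  rw [em_eq, CategoryTheory.Functor.map_id]
  rfl

lemma em_add (B : ModuleCat ℤ) {X Y : ModuleCat ℤ} (f g : X ⟶ Y) :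
    exm B (f + g) = exm B f + exm B g := by
  rw [em_eq, em_eq, em_eq, Functor.map_add]
  rfl

lemma em_zero (B : ModuleCat ℤ) {X Y : ModuleCat ℤ} : exm B (0 : X ⟶ Y) = 0 := by
  rw [em_eq, Functor.map_zero]
  rfl

lemma em_zsmul (B : ModuleCat ℤ) {X Y : ModuleCat ℤ} (f : X ⟶ Y) (c : ℤ) :
    exm B (c • f) = c • exm B f := by
  rw [em_eq, em_eq, Functor.map_zsmul]
  rfl

lemma em_sum (B : ModuleCat ℤ) {X Y : ModuleCat ℤ} {ι : Type*} (s : Finset ι)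
    (f : ι → (X ⟶ Y)) : exm B (∑ i ∈ s, f i) = ∑ i ∈ s, exm B (f i) :=
  map_sum (AddMonoidHom.mk' (exm B) (em_add B)) f s

lemma hom_sum_apply {M N : ModuleCat ℤ} {ι : Type*} (s : Finset ι) (φ : ι → (M ⟶ N)) (x : M) :
    (∑ i ∈ s, φ i) x = ∑ i ∈ s, φ i x := by
  induction s using Finset.cons_induction with
  | empty => rfl
  | cons a s ha ih => rw [Finset.sum_cons, Finset.sum_cons, ← ih]; rfl

lemma IsDivisibleElt.map' {M N : ModuleCat ℤ} (φ : M ⟶ N) {x : M}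
    (hx : IsDivisibleElt x) : IsDivisibleElt (φ x) := by
  intro n hn
  obtain ⟨y, hy⟩ := hx n hn
  exact ⟨φ y, by rw [← hy]; exact (map_zsmul φ.hom n y).symm⟩

end EmAPI

section MainAux
open CategoryTheory.Limits

lemma ext1_eq_zero_of_isZero {X : ModuleCat ℤ} (hX : IsZero X) (B : ModuleCat ℤ)
    (w : Ext1 X B) : w = 0 := by
  have h1 : (𝟙 X : X ⟶ X) = 0 := hX.eq_of_src _ _
  calc w = exm B (𝟙 X) w := by rw [em_id]; rfl
  _ = exm B (0 : X ⟶ X) w := by rw [h1]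
  _ = 0 := by rw [em_zero]; rfl

lemma main_aux (B : ModuleCat ℤ) {C F : ModuleCat ℤ} (m : ℤ) (hm : m ≠ 0)
    (π : C ⟶ F) (σ : F ⟶ C) (hd : m • (𝟙 C - π ≫ σ) = 0)
    (L : ModuleCat ℤ ⥤ ModuleCat ℤ) [L.Additive]
    (hw : ∀ w : Ext1 (L.obj F) B, IsDivisibleElt w → w = 0) :
    ∀ z : Ext1 (L.obj C) B, IsDivisibleElt z → z = 0 := by
  intro z hz
  obtain ⟨y, hy⟩ := hz m hm
  set e : L.obj C ⟶ L.obj C := L.map (π ≫ σ) with he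
  set f' : L.obj C ⟶ L.obj C := 𝟙 (L.obj C) - e with hf'
  have hsum : exm B e z + exm B f' z = z := by
    have h1 : e + f' = 𝟙 (L.obj C) := by rw [hf']; abel
    calc exm B e z + exm B f' z = (exm B e + exm B f') z := rfl
    _ = exm B (e + f') z := by rw [← em_add]
    _ = exm B (𝟙 (L.obj C)) z := by rw [h1]
    _ = z := by rw [em_id]; rfl
  have hf'0 : exm B f' z = 0 := by
    have hmf' : m • f' = 0 := by
      have h1 : f' = L.map (𝟙 C - π ≫ σ) := by
        rw [hf', he, Functor.map_sub, CategoryTheory.Functor.map_id]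
      rw [h1, ← Functor.map_zsmul, hd, Functor.map_zero]
    rw [← hy]
    calc exm B f' (m • y) = m • (exm B f' y) := map_zsmul _ m y
    _ = (m • exm B f') y := rfl
    _ = exm B (m • f') y := by rw [em_zsmul]
    _ = exm B (0 : L.obj C ⟶ L.obj C) y := by rw [hmf']
    _ = 0 := by rw [em_zero]; rfl
  have he0 : exm B e z = 0 := by
    have h1 : e = L.map π ≫ L.map σ := by rw [he, Functor.map_comp]
    have hwz : exm B (L.map σ) z = 0 := hw _ (IsDivisibleElt.map' _ hz)
    calc exm B e z = exm B (L.map π ≫ L.map σ) z := by rw [h1]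
    _ = exm B (L.map π) (exm B (L.map σ) z) := by rw [em_comp]; rfl
    _ = exm B (L.map π) 0 := by rw [hwz]
    _ = 0 := map_zero _
  rw [← hsum, hf'0, he0, add_zero]

end MainAux

section TensorFree
open MonoidalCategory

lemma tensor_free (A B : ModuleCat ℤ) (h : ∀ x : Ext1 A B, IsDivisibleElt x → x = 0) (n : ℕ) :
    ∀ w : Ext1 (((tensoringLeft (ModuleCat ℤ)).obj A).obj (ModuleCat.of ℤ (Fin n → ℤ))) B,
      IsDivisibleElt w → w = 0 := by
  set L : ModuleCat ℤ ⥤ ModuleCat ℤ := (tensoringLeft (ModuleCat ℤ)).obj A with hL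
  set F : ModuleCat ℤ := ModuleCat.of ℤ (Fin n → ℤ) with hF
  intro w hw
  let pr : Fin n → (F ⟶ 𝟙_ (ModuleCat ℤ)) := fun i => ModuleCat.ofHom (LinearMap.proj i)
  let inc : Fin n → (𝟙_ (ModuleCat ℤ) ⟶ F) := fun i => ModuleCat.ofHom (LinearMap.single ℤ (fun _ => ℤ) i)
  have hid : (𝟙 F : F ⟶ F) = ∑ i, pr i ≫ inc i := by
    apply ModuleCat.hom_ext; apply LinearMap.ext; intro x
    have h1 : (∑ i, pr i ≫ inc i).hom x = ∑ i : Fin n, Pi.single i (x i) := by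
      rw [ModuleCat.hom_sum, LinearMap.sum_apply]
      rfl
    rw [h1]
    exact (Finset.univ_sum_single x).symm
  have hv : ∀ i, exm B (L.map (inc i)) w = 0 := by
    intro i
    have hvdiv : IsDivisibleElt (exm B (L.map (inc i)) w) := IsDivisibleElt.map' _ hw
    have hu : exm B (ρ_ A).inv (exm B (L.map (inc i)) w) = 0 :=
      h _ (IsDivisibleElt.map' _ hvdiv)
    calc exm B (L.map (inc i)) w
        = exm B (𝟙 (A ⊗ 𝟙_ (ModuleCat ℤ))) (exm B (L.map (inc i)) w) := by rw [em_id]; rfl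
    _ = exm B ((ρ_ A).hom ≫ (ρ_ A).inv) (exm B (L.map (inc i)) w) := by rw [Iso.hom_inv_id]
    _ = exm B (ρ_ A).hom (exm B (ρ_ A).inv (exm B (L.map (inc i)) w)) := by rw [em_comp]; rfl
    _ = exm B (ρ_ A).hom 0 := by rw [hu]
    _ = 0 := map_zero _
  calc w = exm B (𝟙 (L.obj F)) w := by rw [em_id]; rfl
  _ = exm B (L.map (𝟙 F)) w := by rw [CategoryTheory.Functor.map_id]
  _ = exm B (L.map (∑ i, pr i ≫ inc i)) w := by rw [← hid]
  _ = exm B (∑ i, L.map (pr i ≫ inc i)) w := by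
        rw [show L.map (∑ i, pr i ≫ inc i) = ∑ i, L.map (pr i ≫ inc i) from
          map_sum L.mapAddHom _ _]
  _ = (∑ i, exm B (L.map (pr i ≫ inc i))) w := by rw [em_sum]
  _ = ∑ i, exm B (L.map (pr i ≫ inc i)) w := hom_sum_apply _ _ _
  _ = 0 := by
      refine Finset.sum_eq_zero fun i _ => ?_
      rw [Functor.map_comp]
      calc exm B (L.map (pr i) ≫ L.map (inc i)) w
          = exm B (L.map (pr i)) (exm B (L.map (inc i)) w) := by rw [em_comp]; rfl
      _ = exm B (L.map (pr i)) 0 := by rw [hv i]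
      _ = 0 := map_zero _

end TensorFree


section Factor

def mkHom {M N : ModuleCat ℤ} (f : ↑M →+ ↑N) : M ⟶ N :=
  ModuleCat.ofHom <| @LinearMap.mk _ _ _ _ _ _ _ _ _ M.isModule N.isModule
    { toFun := f, map_add' := f.map_add }
    (fun n x => by
      have h1 := by letI := M.isModule; exact Int.cast_smul_eq_zsmul ℤ n x
      have h2 := by letI := N.isModule; exact Int.cast_smul_eq_zsmul ℤ n (f x)
      simp only [Int.cast_id] at h1 h2
      simp only [RingHom.id_apply]; rw [h1, h2]; exact map_zsmul f n x)

@[simp] lemma mkHom_apply {M N : ModuleCat ℤ} (f : ↑M →+ ↑N) (x : ↑M) :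
    mkHom f x = f x := rfl

lemma exists_factor (C : ModuleCat ℤ) (hC : Module.Finite ℤ C) :
    ∃ (n : ℕ) (m : ℤ), m ≠ 0 ∧
      ∃ (π : C ⟶ ModuleCat.of ℤ (Fin n → ℤ)) (σ : ModuleCat.of ℤ (Fin n → ℤ) ⟶ C),
      ∀ x : C, m • (x - σ (π x)) = 0 := by
  classical
  letI : Module ℤ C := C.isModule
  set T : Submodule ℤ C := Submodule.torsion ℤ C with hT
  obtain ⟨S, hS⟩ : T.FG := IsNoetherian.noetherian T
  have hmem : ∀ s ∈ S, s ∈ T := fun s hs => hS ▸ Submodule.subset_span hs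
  have key : ∀ s : C, ∃ a : ℤ, a ≠ 0 ∧ (s ∈ T → a • s = 0) := by
    intro s
    by_cases hs : s ∈ T
    · obtain ⟨⟨a, haa⟩, h2⟩ := hs
      exact ⟨a, nonZeroDivisors.ne_zero haa, fun _ => by rw [← int_smul_eq_zsmul C.isModule]; exact h2⟩
    · exact ⟨1, one_ne_zero, fun h => absurd h hs⟩
  choose a ha1 ha2 using key
  set m := ∏ s ∈ S, a s with hm_def
  have hm : m ≠ 0 := Finset.prod_ne_zero_iff.mpr fun s _ => ha1 s
  have hmT : ∀ t ∈ T, m • t = 0 := by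
    intro t ht
    rw [← hS] at ht
    induction ht using Submodule.span_induction with
    | mem x hx =>
        rw [hm_def, ← Finset.prod_erase_mul S a hx, mul_smul, ha2 x (hmem x hx), zsmul_zero]
    | zero => exact zsmul_zero m
    | add x y _ _ hx hy => rw [zsmul_add, hx, hy, add_zero]
    | smul r x _ hx => rw [smul_comm, hx, smul_zero]
  -- quotient by torsion
  letI : Module ℤ (C ⧸ T) := Submodule.Quotient.module T
  haveI : Module.Free ℤ (C ⧸ T) := Module.free_of_finite_type_torsion_free'
  set ι := Module.Free.ChooseBasisIndex ℤ (C ⧸ T)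
  set b : Module.Basis ι ℤ (C ⧸ T) := Module.Free.chooseBasis ℤ (C ⧸ T)
  set n := Fintype.card ι
  set bb : Module.Basis (Fin n) ℤ (C ⧸ T) := b.reindex (Fintype.equivFin ι)
  obtain ⟨s, hs⟩ := Module.projective_lifting_property T.mkQ LinearMap.id T.mkQ_surjective
  refine ⟨n, m, hm,
    mkHom (M := C) (N := ModuleCat.of ℤ (Fin n → ℤ)) (bb.equivFun.toLinearMap ∘ₗ T.mkQ).toAddMonoidHom,
    mkHom (M := ModuleCat.of ℤ (Fin n → ℤ)) (N := C) (s ∘ₗ bb.equivFun.symm.toLinearMap).toAddMonoidHom, ?_⟩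
  intro x
  have h1 : mkHom (M := ModuleCat.of ℤ (Fin n → ℤ)) (N := C) (s ∘ₗ bb.equivFun.symm.toLinearMap).toAddMonoidHom
      (mkHom (M := C) (N := ModuleCat.of ℤ (Fin n → ℤ)) (bb.equivFun.toLinearMap ∘ₗ T.mkQ).toAddMonoidHom x) = s (T.mkQ x) := by
    simp only [mkHom_apply, LinearMap.toAddMonoidHom_coe, LinearMap.comp_apply,
      LinearEquiv.coe_coe]
    exact congrArg s (bb.equivFun.symm_apply_apply (T.mkQ x))
  rw [h1]
  refine hmT _ ?_
  have : T.mkQ (x - s (T.mkQ x)) = 0 := by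
    have h2 := LinearMap.congr_fun hs (T.mkQ x)
    simp only [LinearMap.comp_apply, LinearMap.id_apply] at h2
    rw [map_sub, h2, sub_self]
  rwa [← Submodule.Quotient.mk_eq_zero, ← Submodule.mkQ_apply]

end Factor

open MonoidalCategory in
/-- If `C` is finitely generated and `Ext¹(A, B)` has no nonzero divisible elements,
then neither do `Ext¹(A ⊗ C, B)` and `Ext¹(Tor₁(A, C), B)`. -/
theorem ext_tensor_tor_no_divisible (A B C : ModuleCat ℤ) (hC : Module.Finite ℤ C)
    (h : ∀ x : Ext1 A B, IsDivisibleElt x → x = 0) :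
    (∀ x : Ext1 (A ⊗ C) B, IsDivisibleElt x → x = 0) ∧
    (∀ x : Ext1 (Tor1 A C) B, IsDivisibleElt x → x = 0) := by
  obtain ⟨n, m, hm, π₀, σ₀, hfac⟩ := exists_factor C hC
  let F : ModuleCat ℤ := ModuleCat.of ℤ (Fin n → ℤ)
  let π : C ⟶ F := π₀
  let σ : F ⟶ C := σ₀
  have hd : m • (𝟙 C - π ≫ σ) = 0 := by
    apply ModuleCat.hom_ext; apply LinearMap.ext; intro x
    show m • (x - σ₀ (π₀ x)) = 0
    exact hfac x
  constructor
  · exact fun z hz => main_aux B m hm π σ hd ((tensoringLeft (ModuleCat ℤ)).obj A)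
      (tensor_free A B h n) z hz
  · haveI : CategoryTheory.Projective F :=
      (IsProjective.iff_projective (Fin n → ℤ)).mp inferInstance
    have hzero : CategoryTheory.Limits.IsZero (((Tor (ModuleCat ℤ) 1).obj A).obj F) :=
      CategoryTheory.isZero_Tor_succ_of_projective (C := ModuleCat ℤ) A F 0
    exact fun z hz => main_aux B m hm π σ hd ((Tor (ModuleCat ℤ) 1).obj A)
      (fun w _ => ext1_eq_zero_of_isZero hzero B w) z hz
end

section
/- The class 𝒟 of abelian groups that are a direct sum of a finitely generated free abelian group and a bounded torsion group is closed under kernels, cokernels, and extensions of homomorphisms between groups in 𝒟. -/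
open LinearMap
open scoped DirectSum

/-- A group lies in the class `𝒟` if it is (isomorphic to) the direct sum of a finitely
generated free abelian group and a bounded torsion group. -/
def InD (G : Type) [AddCommGroup G] : Prop :=
  ∃ (k : ℕ) (n : ℤ) (T : Type) (_ : AddCommGroup T),
    n ≠ 0 ∧ (∀ t : T, n • t = 0) ∧ Nonempty (G ≃+ ((Fin k → ℤ) × T))

/-- Over `ℤ` (a noetherian ring), a submodule contained in a finitely generated submodule is
itself finitely generated. -/
lemma fg_of_le' {M : Type} [AddCommGroup M] {N P : Submodule ℤ M} (h : N ≤ P) (hP : P.FG) :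
    N.FG := by
  haveI := isNoetherian_of_fg_of_noetherian P hP
  exact isNoetherian_submodule.mp inferInstance N h

lemma range_lsmul_map_equiv {M N : Type} [AddCommGroup M] [AddCommGroup N]
    (E : M ≃ₗ[ℤ] N) (n : ℤ) :
    LinearMap.range (lsmul ℤ N n)
      = Submodule.map (E : M →ₗ[ℤ] N) (LinearMap.range (lsmul ℤ M n)) := by
  ext y
  simp only [LinearMap.mem_range, Submodule.mem_map, lsmul_apply]
  constructor
  · rintro ⟨x, rfl⟩
    exact ⟨n • E.symm x, ⟨E.symm x, rfl⟩, by simp⟩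
  · rintro ⟨z, ⟨w, rfl⟩, rfl⟩
    exact ⟨E w, by simp⟩

lemma range_lsmul_prod {M N : Type} [AddCommGroup M] [AddCommGroup N] (n : ℤ) :
    LinearMap.range (lsmul ℤ (M × N) n)
      = (LinearMap.range (lsmul ℤ M n)).prod (LinearMap.range (lsmul ℤ N n)) := by
  ext ⟨a, b⟩
  simp only [LinearMap.mem_range, Submodule.mem_prod, lsmul_apply]
  constructor
  · rintro ⟨⟨x, y⟩, h⟩
    rw [Prod.smul_mk, Prod.mk.injEq] at h
    exact ⟨⟨x, h.1⟩, ⟨y, h.2⟩⟩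
  · rintro ⟨⟨x, hx⟩, ⟨y, hy⟩⟩
    exact ⟨(x, y), by rw [Prod.smul_mk, hx, hy]⟩

/-- If `C ≅ ℤ^k × T` with `m • T = 0`, the image of multiplication by any multiple of `m`
is a finitely generated subgroup of `C`. -/
lemma fg_range_lsmul_mul {C T : Type} [AddCommGroup C] [AddCommGroup T] {k : ℕ}
    (e : C ≃+ ((Fin k → ℤ) × T)) {m : ℤ} (hm : ∀ t : T, m • t = 0) (j : ℤ) :
    (LinearMap.range (lsmul ℤ C (j * m))).FG := by
  have hT : LinearMap.range (lsmul ℤ T (j * m)) = ⊥ := by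
    rw [eq_bot_iff]
    rintro x ⟨t, rfl⟩
    simp [mul_smul, hm t]
  have hF : (LinearMap.range (lsmul ℤ (Fin k → ℤ) (j * m))).FG :=
    fg_of_le' le_top (Module.finite_def.mp inferInstance)
  rw [range_lsmul_map_equiv e.symm.toIntLinearEquiv (j * m)]
  apply Submodule.FG.map
  rw [range_lsmul_prod, hT]
  exact Submodule.FG.prod hF Submodule.fg_bot

/-- A group in `𝒟` has, for some nonzero `n`, a finitely generated image of
multiplication by `n`. -/
lemma fg_of_inD {G : Type} [AddCommGroup G] (h : InD G) :
    ∃ n : ℤ, n ≠ 0 ∧ (LinearMap.range (lsmul ℤ G n)).FG := by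
  obtain ⟨k, n, T, _, hn, hT, ⟨e⟩⟩ := h
  refine ⟨n, hn, ?_⟩
  rw [← one_mul n]
  exact fg_range_lsmul_mul e hT 1

/-- Splitting lemma: a group with a surjection onto `ℤ^k` whose kernel is `n`-torsion
lies in `𝒟`. -/
lemma inD_of_surj {G : Type} [AddCommGroup G] {k : ℕ} (π : G →+ (Fin k → ℤ))
    (hsurj : Function.Surjective π) {n : ℤ} (hn : n ≠ 0)
    (htor : ∀ g : G, π g = 0 → n • g = 0) : InD G := by
  choose sec hsec using hsurj
  classical
  let gen : Fin k → G := fun i => sec (Pi.single i 1)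
  let s : (Fin k → ℤ) →+ G :=
    { toFun := fun v => ∑ i, v i • gen i
      map_zero' := Finset.sum_eq_zero fun i _ => by rw [Pi.zero_apply, zero_smul]
      map_add' := by
        intro v w
        simp only [Pi.add_apply, add_zsmul, Finset.sum_add_distrib] }
  have hπs : ∀ v, π (s v) = v := by
    intro v
    show π (∑ i, v i • gen i) = v
    rw [map_sum]
    have h1 : ∀ i : Fin k, π (v i • gen i) = Pi.single i (v i) := by
      intro i
      rw [map_zsmul, hsec]
      rw [← Pi.single_smul' i (v i) (1 : ℤ), smul_eq_mul, mul_one]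
    simp_rw [h1]
    exact Finset.univ_sum_single v
  refine ⟨k, n, π.ker, inferInstance, hn, ?_, ⟨?_⟩⟩
  · rintro ⟨t, ht⟩
    have := htor t (AddMonoidHom.mem_ker.mp ht)
    exact Subtype.ext (by simpa using this)
  · refine
      { toFun := fun g => (π g, ⟨g - s (π g), by
          rw [AddMonoidHom.mem_ker, map_sub, hπs, sub_self]⟩)
        invFun := fun p => s p.1 + (p.2 : G)
        left_inv := fun g => by simp
        right_inv := fun p => by
          obtain ⟨v, t, ht⟩ := p
          have h1 : π (s v + t) = v := by
            rw [map_add, hπs, AddMonoidHom.mem_ker.mp ht, add_zero]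
          refine Prod.ext h1 (Subtype.ext ?_)
          simp [h1]
        map_add' := fun g g' => by
          refine Prod.ext (map_add _ _ _) (Subtype.ext ?_)
          show g + g' - s (π (g + g')) = (g - s (π g)) + (g' - s (π g'))
          rw [map_add, map_add]
          abel }

/-- If multiplication by some nonzero `n` has finitely generated image, the group is in `𝒟`. -/
lemma inD_of_fg {G : Type} [AddCommGroup G] {n : ℤ} (hn : n ≠ 0)
    (hfg : (LinearMap.range (lsmul ℤ G n)).FG) : InD G := by
  set R := LinearMap.range (lsmul ℤ G n) with hR
  haveI : Module.Finite ℤ R := Module.Finite.iff_fg.mpr hfg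
  haveI : AddGroup.FG R := Module.Finite.iff_addGroup_fg.mp inferInstance
  obtain ⟨j, ι, _, p, hp, e, ⟨eR⟩⟩ := AddCommGroup.equiv_free_prod_directSum_zmod ↥R
  set m : ℕ := ∏ i : ι, p i ^ e i with hmdef
  have hmne : (m : ℤ) ≠ 0 := by
    have : m ≠ 0 := Finset.prod_ne_zero_iff.mpr fun i _ => pow_ne_zero _ (hp i).pos.ne'
    exact_mod_cast this
  have hmd : ∀ d : ⨁ i : ι, ZMod (p i ^ e i), m • d = 0 := by
    intro d
    refine DFinsupp.ext fun i => ?_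
    haveI : NeZero (p i ^ e i) := ⟨pow_ne_zero _ (hp i).pos.ne'⟩
    rw [DFinsupp.smul_apply, DFinsupp.zero_apply, nsmul_eq_mul,
      (ZMod.natCast_eq_zero_iff m (p i ^ e i)).mpr
        (Finset.dvd_prod_of_mem _ (Finset.mem_univ i)), zero_mul]
  let toR : G →+ R :=
    { toFun := fun g => ⟨n • g, ⟨g, rfl⟩⟩
      map_zero' := Subtype.ext (smul_zero n)
      map_add' := fun a b => Subtype.ext (smul_add n a b) }
  have htoR : Function.Surjective toR := by
    rintro ⟨x, g, rfl⟩
    exact ⟨g, rfl⟩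
  let π : G →+ (Fin j → ℤ) :=
    (Finsupp.addEquivFunOnFinite.toAddMonoidHom.comp
      ((AddMonoidHom.fst (Fin j →₀ ℤ) _).comp eR.toAddMonoidHom)).comp toR
  have hπapp : ∀ g : G, π g = Finsupp.addEquivFunOnFinite ((eR (toR g)).1) := fun g => rfl
  have hπsurj : Function.Surjective π := by
    intro v
    obtain ⟨x, hx⟩ := eR.surjective (Finsupp.addEquivFunOnFinite.symm v, 0)
    obtain ⟨g, hg⟩ := htoR x
    refine ⟨g, ?_⟩
    rw [hπapp, hg, hx]
    simp
  refine inD_of_surj π hπsurj (n := (m : ℤ) * n) (mul_ne_zero hmne hn) ?_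
  intro g hg
  have h1 : (eR (toR g)).1 = 0 := by
    have : Finsupp.addEquivFunOnFinite ((eR (toR g)).1) = 0 := hg
    simpa using congrArg Finsupp.addEquivFunOnFinite.symm this
  have h2 : m • toR g = 0 := by
    apply eR.injective
    rw [map_nsmul, map_zero]
    refine Prod.ext (by simp [h1]) (by simp [hmd])
  have hcoe : ((m • toR g : ↥R) : G) = m • (n • g) := by
    push_cast
    rfl
  rw [mul_smul, natCast_zsmul, ← hcoe, h2, ZeroMemClass.coe_zero]

/-- The class `𝒟` is closed under kernels, cokernels and extensions. -/
theorem D_closed_ker_coker_ext :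
    (∀ (A B : Type) [AddCommGroup A] [AddCommGroup B] (f : A →+ B),
      InD A → InD B → InD f.ker) ∧
    (∀ (A B : Type) [AddCommGroup A] [AddCommGroup B] (f : A →+ B),
      InD A → InD B → InD (B ⧸ f.range)) ∧
    (∀ (A B C : Type) [AddCommGroup A] [AddCommGroup B] [AddCommGroup C]
      (f : A →+ B) (g : B →+ C), Function.Injective f → Function.Surjective g →
      f.range = g.ker → InD A → InD C → InD B) := by
  refine ⟨?_, ?_, ?_⟩
  · -- kernels
    intro A B _ _ f hA _
    obtain ⟨n, hn, hfg⟩ := fg_of_inD hA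
    apply inD_of_fg hn
    let ι : ↥f.ker →ₗ[ℤ] A := (f.ker.subtype).toIntLinearMap
    apply Submodule.fg_of_fg_map_injective ι Subtype.val_injective
    refine fg_of_le' ?_ hfg
    rintro x ⟨y, ⟨z, rfl⟩, rfl⟩
    exact ⟨(z : A), by simp [ι]⟩
  · -- cokernels
    intro A B _ _ f _ hB
    obtain ⟨n, hn, hfg⟩ := fg_of_inD hB
    apply inD_of_fg hn
    have key : LinearMap.range (lsmul ℤ (B ⧸ f.range) n)
        = (LinearMap.range (lsmul ℤ B n)).map
            (QuotientAddGroup.mk' f.range).toIntLinearMap := by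
      ext q
      simp only [LinearMap.mem_range, Submodule.mem_map, lsmul_apply]
      constructor
      · rintro ⟨x, rfl⟩
        obtain ⟨b, rfl⟩ := QuotientAddGroup.mk'_surjective f.range x
        exact ⟨n • b, ⟨b, rfl⟩, by simp⟩
      · rintro ⟨y, ⟨b, rfl⟩, rfl⟩
        exact ⟨QuotientAddGroup.mk' f.range b, by simp⟩
    rw [key]
    exact hfg.map _
  · -- extensions
    intro A B C _ _ _ f g hf hg hfg hA hC
    obtain ⟨kC, m, T, _, hm0, hmT, ⟨eC⟩⟩ := hC
    obtain ⟨n, hn, hfgA⟩ := fg_of_inD hA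
    apply inD_of_fg (n := n * m) (mul_ne_zero hn hm0)
    apply Submodule.fg_of_fg_map_of_fg_inf_ker g.toIntLinearMap
    · -- the image in C is finitely generated
      have key : (LinearMap.range (lsmul ℤ B (n * m))).map g.toIntLinearMap
          = LinearMap.range (lsmul ℤ C (n * m)) := by
        ext c
        simp only [LinearMap.mem_range, Submodule.mem_map, lsmul_apply]
        constructor
        · rintro ⟨y, ⟨b, rfl⟩, rfl⟩
          exact ⟨g b, by simp⟩
        · rintro ⟨c', rfl⟩
          obtain ⟨b, rfl⟩ := hg c'
          exact ⟨(n * m) • b, ⟨b, rfl⟩, by simp⟩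
      rw [key]
      exact fg_range_lsmul_mul eC hmT n
    · -- the part mapping to 0 in C lies in f(nA), which is finitely generated
      refine fg_of_le' ?_ (hfgA.map f.toIntLinearMap)
      rintro x ⟨⟨b, rfl⟩, hker⟩
      have h1 : (n * m) • g b = 0 := by
        have : g ((lsmul ℤ B (n * m)) b) = 0 := hker
        simpa using this
      -- the free part of `g b` is killed
      have h2 : m • g b = 0 := by
        have h3 : (n * m) • eC (g b) = 0 := by rw [← map_zsmul, h1, map_zero]
        have h4 : (eC (g b)).1 = 0 := by
          have := congrArg Prod.fst h3
          rw [Prod.smul_fst, Prod.fst_zero] at this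
          funext i
          have hi := congrFun this i
          rw [Pi.smul_apply, smul_eq_mul, Pi.zero_apply] at hi
          rcases mul_eq_zero.mp hi with h | h
          · exact absurd h (mul_ne_zero hn hm0)
          · exact h
        apply eC.injective
        rw [map_zsmul, map_zero, ← Prod.mk.eta (p := eC (g b)), Prod.smul_mk, h4, smul_zero,
          hmT]
        rfl
      have h5 : m • b ∈ f.range := by
        rw [hfg, AddMonoidHom.mem_ker, map_zsmul, h2]
      obtain ⟨a, ha⟩ := h5
      refine ⟨n • a, ⟨a, rfl⟩, ?_⟩
      show f (n • a) = (lsmul ℤ B (n * m)) b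
      rw [map_zsmul, ha, lsmul_apply, mul_smul]
end
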